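/- arXiv:1904.08449 — 4 statements merged into one kernel-verified Lean document; each statement's English description precedes it below -/
import Mathlib

section
/- Let f : ℝ^n → ℝ^n be a vector field, P : ℝ^n → ℝ^n a bijective linear map, and (ψ_i)_{i∈I} a family of Koopman eigenfunctions of f with eigenvalues λ_i ∈ ℂ such that, for each i, the composition x ↦ ψ_i(P x) is also a Koopman eigenfunction of f with the same eigenvalue λ_i. Assume the gradients of the family separate directions: for every y ∈ ℝ^n, the only vector w ∈ ℝ^n with Dψ_i(y)[w] = 0 for all i ∈ I is w = 0. Then f is symmetric with respect to P, i.e. f(P x) = P f(x) for all x ∈ ℝ^n. (Converse direction of the paper's Theorem 4.) -/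
/-! Differentiating `ψ ∘ P` by the chain rule, the eigenfunction equations for `ψ` at `P x`
and for `ψ ∘ P` at `x` give `Dψ(P x)[f (P x)] = λ ψ(P x) = Dψ(P x)[P (f x)]` for every member
of the family, and the separation hypothesis turns this into `f (P x) = P (f x)`. -/

section

variable {𝕜 : Type*} [NontriviallyNormedField 𝕜]
  {E F : Type*} [NormedAddCommGroup E] [NormedSpace 𝕜 E]
  [NormedAddCommGroup F] [NormedSpace 𝕜 F]

theorem fderiv_comp_linearEquiv_apply [CompleteSpace 𝕜] [FiniteDimensional 𝕜 E]
    {G : Type*} [NormedAddCommGroup G] [NormedSpace 𝕜 G]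
    (P : E ≃ₗ[𝕜] F) (ψ : F → G) (x v : E) :
    fderiv 𝕜 (fun y => ψ (P y)) x v = fderiv 𝕜 ψ (P x) (P v) :=
  congrArg (· v) (P.toContinuousLinearEquiv.comp_right_fderiv (f := ψ) (x := x))

theorem eq_of_forall_fderiv_apply_eq {ι : Type*} {ψ : ι → E → F} {y : E}
    (hsep : ∀ w, (∀ i, fderiv 𝕜 (ψ i) y w = 0) → w = 0) {v w : E}
    (h : ∀ i, fderiv 𝕜 (ψ i) y v = fderiv 𝕜 (ψ i) y w) : v = w :=
  sub_eq_zero.mp <| hsep _ fun i => by rw [map_sub, h, sub_self]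

end

theorem symmetry_of_koopman_eigenfunctions_general
    {n : ℕ} (f : (Fin n → ℝ) → (Fin n → ℝ))
    (P : (Fin n → ℝ) ≃ₗ[ℝ] (Fin n → ℝ))
    {I : Type*} (ψ : I → (Fin n → ℝ) → ℂ) (lam : I → ℂ)
    (heig : ∀ i x, fderiv ℝ (ψ i) x (f x) = lam i * ψ i x)
    (heig' : ∀ i x, fderiv ℝ (fun y => ψ i (P y)) x (f x) = lam i * ψ i (P x))
    (hsep : ∀ y : Fin n → ℝ, ∀ w : Fin n → ℝ, (∀ i, fderiv ℝ (ψ i) y w = 0) → w = 0) :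
    ∀ x, f (P x) = P (f x) := by
  intro x
  refine eq_of_forall_fderiv_apply_eq (hsep (P x)) fun i => ?_
  calc fderiv ℝ (ψ i) (P x) (f (P x))
      = lam i * ψ i (P x) := heig i (P x)
    _ = fderiv ℝ (fun y => ψ i (P y)) x (f x) := (heig' i x).symm
    _ = fderiv ℝ (ψ i) (P x) (P (f x)) := fderiv_comp_linearEquiv_apply P (ψ i) x (f x)

/-- Converse direction of Theorem 4. If `P` is a bijective linear map and every
member of a family of Koopman eigenfunctions of `f` remains an eigenfunction with the same
eigenvalue after composition with `P`, and the gradients of the family separate directions,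
then `f` is symmetric with respect to `P`. -/
theorem symmetry_of_koopman_eigenfunctions
    {n : ℕ} (f : (Fin n → ℝ) → (Fin n → ℝ))
    (P : (Fin n → ℝ) ≃ₗ[ℝ] (Fin n → ℝ))
    {I : Type*} (ψ : I → (Fin n → ℝ) → ℂ) (lam : I → ℂ)
    (hψ : ∀ i, Differentiable ℝ (ψ i))
    (heig : ∀ i x, fderiv ℝ (ψ i) x (f x) = lam i * ψ i x)
    (heig' : ∀ i x, fderiv ℝ (fun y => ψ i (P y)) x (f x) = lam i * ψ i (P x))
    (hsep : ∀ y : Fin n → ℝ, ∀ w : Fin n → ℝ, (∀ i, fderiv ℝ (ψ i) y w = 0) → w = 0) :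
    ∀ x, f (P x) = P (f x) :=
  symmetry_of_koopman_eigenfunctions_general f P ψ lam heig heig' hsep
end

section
/- (Finite version of the paper's Lemma 7.) Let f : ℝ^n → ℝ^n be a vector field symmetric with respect to a linear map P : ℝ^n → ℝ^n with P^k = id for some k ≥ 2 and P ≠ id. Let (ψ_i)_{i∈I} be a finite, ℂ-linearly independent family of Koopman eigenfunctions of f with eigenvalues λ_i ∈ ℂ, giving a full-state Koopman mode decomposition with modes v_i ∈ ℂ^n, and assume each composed function x ↦ ψ_i(P x) lies in the ℂ-linear span of the family (ψ_j)_{j∈I}. Suppose further there is a measurement h = Σ_{i∈I} a_i·ψ_i with all coefficients a_i ≠ 0 such that h(P x) = h(x) for all x ∈ ℝ^n. Then the Koopman eigenvalues are not pairwise distinct: there exist indices i ≠ j in I with λ_i = λ_j (the Koopman spectrum has a repeated eigenvalue). -/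
/-!
If the eigenvalues were pairwise distinct, every eigenspace of the Koopman generator within the
span of the family would be a line. Since `P` commutes with the flow, `ψ i ∘ P` is again an
eigenfunction with eigenvalue `λ i` in that span, hence `ψ i ∘ P = d i • ψ i`. The `P`-invariance
of `h = Σ a i • ψ i` with all `a i ≠ 0` then forces `d i = 1`, so every `ψ i` is `P`-invariant,
and the full-state decomposition recovers `x` from the values `ψ i x`: `P x = x` for all `x`.
-/

open Finset Function Submodule

section LinearAlgebra

variable {K M I : Type*} [Field K] [AddCommGroup M] [Module K M] [Fintype I]
  {ψ : I → M} {c lam : I → K}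

theorem LinearIndependent.eq_zero_of_sum_smul_smul_eq (hψ : LinearIndependent K ψ) {μ : K}
    (h : ∑ j, c j • lam j • ψ j = μ • ∑ j, c j • ψ j) {i : I} (hi : lam i ≠ μ) : c i = 0 := by
  have hzero : ∑ j, (c j * (lam j - μ)) • ψ j = 0 := by
    simp only [mul_sub, sub_smul, sum_sub_distrib, mul_smul, smul_sum, h, smul_comm μ]
    exact sub_self _
  have := Fintype.linearIndependent_iff.mp hψ _ hzero i
  exact (mul_eq_zero.mp this).resolve_right (sub_ne_zero.mpr hi)

theorem LinearIndependent.sum_smul_eq_smul_of_injective (hψ : LinearIndependent K ψ)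
    (hlam : Injective lam) {i : I} (h : ∑ j, c j • lam j • ψ j = lam i • ∑ j, c j • ψ j) :
    ∑ j, c j • ψ j = c i • ψ i :=
  sum_eq_single i
    (fun j _ hji => by rw [hψ.eq_zero_of_sum_smul_smul_eq h (hlam.ne hji), zero_smul])
    (fun hi => absurd (mem_univ i) hi)

end LinearAlgebra

section Koopman

variable {E : Type*} [NormedAddCommGroup E] [NormedSpace ℝ E]

noncomputable def koopmanGenerator (f : E → E) (g : E → ℂ) : E → ℂ :=
  fun x => fderiv ℝ g x (f x)

def IsKoopmanEigenfunction (f : E → E) (ψ : E → ℂ) (μ : ℂ) : Prop :=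
  Differentiable ℝ ψ ∧ koopmanGenerator f ψ = μ • ψ

theorem koopmanGenerator_sum_smul {I : Type*} [Fintype I] (f : E → E) {ψ : I → E → ℂ}
    (hψ : ∀ i, Differentiable ℝ (ψ i)) (c : I → ℂ) :
    koopmanGenerator f (∑ i, c i • ψ i) = ∑ i, c i • koopmanGenerator f (ψ i) := by
  funext x
  simp only [koopmanGenerator, fderiv_sum fun i _ => ((hψ i).const_smul (c i)).differentiableAt,
    fderiv_const_smul (hψ _).differentiableAt, _root_.sum_apply,
    _root_.smul_apply, Finset.sum_apply, Pi.smul_apply]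

theorem IsKoopmanEigenfunction.comp_of_commute {f : E → E} {ψ : E → ℂ} {μ : ℂ}
    (hψ : IsKoopmanEigenfunction f ψ μ) {P : E →L[ℝ] E} (hsym : ∀ x, f (P x) = P (f x)) :
    IsKoopmanEigenfunction f (ψ ∘ P) μ := by
  refine ⟨hψ.1.comp P.differentiable, funext fun x => ?_⟩
  have hderiv : fderiv ℝ (ψ ∘ P) x = (fderiv ℝ ψ (P x)).comp P :=
    (fderiv_comp x (hψ.1 _) P.differentiableAt).trans (by rw [P.fderiv])
  simp only [koopmanGenerator, hderiv, ContinuousLinearMap.comp_apply, ← hsym]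
  exact congrFun hψ.2 (P x)

theorem IsKoopmanEigenfunction.exists_eq_smul_of_mem_span {I : Type*} [Fintype I] {f : E → E}
    {ψ : I → E → ℂ} {lam : I → ℂ} (hψ : ∀ i, IsKoopmanEigenfunction f (ψ i) (lam i))
    (hind : LinearIndependent ℂ ψ) (hlam : Injective lam) {g : E → ℂ} {i : I}
    (hg : IsKoopmanEigenfunction f g (lam i)) (hspan : g ∈ span ℂ (Set.range ψ)) :
    ∃ d : ℂ, g = d • ψ i := by
  obtain ⟨c, rfl⟩ := (mem_span_range_iff_exists_fun ℂ).mp hspan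
  refine ⟨c i, hind.sum_smul_eq_smul_of_injective hlam ?_⟩
  have hgen := hg.2
  rwa [koopmanGenerator_sum_smul f fun j => (hψ j).1, sum_congr rfl fun j _ => by
    rw [(hψ j).2]] at hgen

end Koopman

theorem eq_of_forall_apply_eq_of_modeDecomposition {ι I : Type*} [Fintype I]
    {ψ : I → (ι → ℝ) → ℂ} {v : I → ι → ℂ}
    (hdecomp : ∀ x : ι → ℝ, (fun j => (x j : ℂ)) = ∑ i, ψ i x • v i) {x y : ι → ℝ}
    (h : ∀ i, ψ i x = ψ i y) : x = y := by
  have hcomplex : (fun j => (x j : ℂ)) = fun j => (y j : ℂ) := by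
    simp only [hdecomp, h]
  funext j
  exact_mod_cast congrFun hcomplex j

theorem symmetric_system_has_repeated_koopman_eigenvalue_general
    {n : ℕ} (f : (Fin n → ℝ) → (Fin n → ℝ))
    (P : (Fin n → ℝ) →ₗ[ℝ] (Fin n → ℝ))
    (hPne : ⇑P ≠ id)
    (hsym : ∀ x, f (P x) = P (f x))
    {I : Type*} [Fintype I]
    (ψ : I → (Fin n → ℝ) → ℂ) (lam : I → ℂ) (v : I → (Fin n → ℂ))
    (hind : LinearIndependent ℂ ψ)
    (hψ : ∀ i, Differentiable ℝ (ψ i))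
    (heig : ∀ i x, fderiv ℝ (ψ i) x (f x) = lam i * ψ i x)
    (hdecomp : ∀ x : Fin n → ℝ, (fun j => (x j : ℂ)) = ∑ i, ψ i x • v i)
    (hclosed : ∀ i, (fun x => ψ i (P x)) ∈ Submodule.span ℂ (Set.range ψ))
    (a : I → ℂ) (ha : ∀ i, a i ≠ 0)
    (hinv : ∀ x, ∑ i, a i * ψ i (P x) = ∑ i, a i * ψ i x) :
    ∃ i j : I, i ≠ j ∧ lam i = lam j := by
  by_contra! hdistinct
  have hlam : Injective lam := fun i j h => by_contra fun hij => hdistinct i j hij h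
  have hkoop i : IsKoopmanEigenfunction f (ψ i) (lam i) := ⟨hψ i, funext (heig i)⟩
  let Pc := LinearMap.toContinuousLinearMap P
  choose d hd using fun i =>
    ((hkoop i).comp_of_commute (P := Pc) hsym).exists_eq_smul_of_mem_span hkoop hind hlam
      (hclosed i)
  have hd_apply i x : ψ i (P x) = d i * ψ i x := congrFun (hd i) x
  have hinv' : ∑ i, a i • d i • ψ i = (1 : ℂ) • ∑ i, a i • ψ i := by
    funext x
    simpa [Finset.sum_apply, hd_apply, mul_assoc] using hinv x
  have hd_one i : d i = 1 := by
    by_contra hne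
    exact ha i (hind.eq_zero_of_sum_smul_smul_eq hinv' hne)
  exact hPne <| funext fun x =>
    eq_of_forall_apply_eq_of_modeDecomposition hdecomp fun i => by rw [hd_apply, hd_one, one_mul, id]

/-- finite version of the paper's Lemma 7: Let `f` be symmetric with respect
to a nontrivial linear map `P` with `P^k = id`, `k ≥ 2`.  Let `(ψ i)` be a finite,
`ℂ`-linearly independent family of Koopman eigenfunctions of `f` (eigenvalues `lam i`) giving
a full-state Koopman mode decomposition with modes `v i`, closed under composition with `P`
in the sense that each `x ↦ ψ i (P x)` lies in the span of the family.  If there is a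
measurement `h = Σ a i • ψ i` with all `a i ≠ 0` that is `P`-invariant, then the Koopman
eigenvalues are not pairwise distinct: some eigenvalue is repeated. -/
theorem symmetric_system_has_repeated_koopman_eigenvalue
    {n : ℕ} (f : (Fin n → ℝ) → (Fin n → ℝ))
    (P : (Fin n → ℝ) →ₗ[ℝ] (Fin n → ℝ))
    (k : ℕ) (hk : 2 ≤ k) (hPk : (⇑P)^[k] = id) (hPne : ⇑P ≠ id)
    (hsym : ∀ x, f (P x) = P (f x))
    {I : Type*} [Fintype I]
    (ψ : I → (Fin n → ℝ) → ℂ) (lam : I → ℂ) (v : I → (Fin n → ℂ))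
    (hind : LinearIndependent ℂ ψ)
    (hψ : ∀ i, Differentiable ℝ (ψ i))
    (heig : ∀ i x, fderiv ℝ (ψ i) x (f x) = lam i * ψ i x)
    (hdecomp : ∀ x : Fin n → ℝ, (fun j => (x j : ℂ)) = ∑ i, ψ i x • v i)
    (hclosed : ∀ i, (fun x => ψ i (P x)) ∈ Submodule.span ℂ (Set.range ψ))
    (a : I → ℂ) (ha : ∀ i, a i ≠ 0)
    (hinv : ∀ x, ∑ i, a i * ψ i (P x) = ∑ i, a i * ψ i x) :
    ∃ i j : I, i ≠ j ∧ lam i = lam j :=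
  symmetric_system_has_repeated_koopman_eigenvalue_general f P hPne hsym ψ lam v hind hψ heig
    hdecomp hclosed a ha hinv
end

section
/- (Part (a) of the paper's Corollary 6.) Let P be a real n×n matrix with P^k = I for some k ≥ 1, also regarded as a complex matrix acting on ℂ^n. Let (ψ_i)_{i∈I} be a finite, ℂ-linearly independent family of functions ℝ^n → ℂ giving a full-state Koopman mode decomposition with modes v_i ∈ ℂ^n, and suppose every ψ_i has a rotational symmetry ψ_i(P x) = c_i·ψ_i(x) for all x ∈ ℝ^n, with c_i ∈ ℂ. Then each Koopman mode satisfies v_i = c_i·P^{k−1}·v_i. -/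
/-! The symmetry turns the decomposition at `P x` into a second decomposition of the full state
with modes `c i • P^(k-1) v i`, since `P^(k-1) P = 1`. Linear independence of the `ψ i` makes
the modes of a full-state decomposition unique, so the two families of modes agree. -/

open Matrix

theorem LinearIndependent.eq_of_forall_sum_smul_eq {R X ι I : Type*} [CommSemiring R]
    [Fintype I] {ψ : I → X → R} (hψ : LinearIndependent R ψ) {v w : I → ι → R}
    (h : ∀ x, ∑ i, ψ i x • v i = ∑ i, ψ i x • w i) : v = w := by
  funext i j
  refine Fintype.linearIndependent_iffₛ.1 hψ (fun i => v i j) (fun i => w i j) ?_ i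
  funext x
  simpa [Finset.sum_apply, mul_comm] using congr_fun (h x) j

theorem sum_smul_mulVec_eq_of_rotational_symmetry {n : ℕ} {I : Type*} [Fintype I]
    {P : Matrix (Fin n) (Fin n) ℝ} {Q : Matrix (Fin n) (Fin n) ℂ}
    (hQP : Q * P.map Complex.ofReal = 1) {ψ : I → (Fin n → ℝ) → ℂ} {v : I → Fin n → ℂ}
    (hdecomp : ∀ x : Fin n → ℝ, (fun j => (x j : ℂ)) = ∑ i, ψ i x • v i)
    {c : I → ℂ} (hrot : ∀ i x, ψ i (P *ᵥ x) = c i * ψ i x) (x : Fin n → ℝ) :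
    ∑ i, ψ i x • (c i • Q *ᵥ v i) = fun j => (x j : ℂ) :=
  calc ∑ i, ψ i x • (c i • Q *ᵥ v i)
      = Q *ᵥ ∑ i, ψ i (P *ᵥ x) • v i := by
        simp only [mulVec_sum, mulVec_smul, hrot, smul_smul, mul_comm]
    _ = Q *ᵥ (P.map Complex.ofReal *ᵥ fun j => (x j : ℂ)) := by
        rw [← hdecomp]
        congr 1
        funext j
        exact Complex.ofRealHom.map_mulVec P x j
    _ = fun j => (x j : ℂ) := by rw [mulVec_mulVec, hQP, one_mulVec]

/-- part (a) of the paper's Corollary 6: Let `P` be a real `n×n` matrix with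
`P^k = 1`, `k ≥ 1`, and let `(ψ i)` be a finite `ℂ`-linearly independent family giving a
full-state Koopman mode decomposition with modes `v i`, each `ψ i` having a rotational
symmetry `ψ i (P·x) = c i * ψ i x`.  Then each Koopman mode satisfies
`v i = c i • P^{k-1} · v i` (with `P` regarded as a complex matrix). -/
theorem rotational_symmetry_koopman_mode
    {n : ℕ} (P : Matrix (Fin n) (Fin n) ℝ) (k : ℕ) (hk : 1 ≤ k) (hPk : P ^ k = 1)
    {I : Type*} [Fintype I]
    (ψ : I → (Fin n → ℝ) → ℂ) (v : I → (Fin n → ℂ))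
    (hind : LinearIndependent ℂ ψ)
    (hdecomp : ∀ x : Fin n → ℝ, (fun j => (x j : ℂ)) = ∑ i, ψ i x • v i)
    (c : I → ℂ)
    (hrot : ∀ i, ∀ x, ψ i (P.mulVec x) = c i * ψ i x) :
    ∀ i, v i = c i • ((P.map (Complex.ofReal)) ^ (k - 1)).mulVec (v i) := by
  have hQP : (P.map Complex.ofReal) ^ (k - 1) * P.map Complex.ofReal = 1 := by
    change Complex.ofRealHom.mapMatrix P ^ (k - 1) * Complex.ofRealHom.mapMatrix P = 1
    rw [← pow_succ, Nat.sub_add_cancel hk, ← map_pow, hPk, map_one]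
  refine congr_fun (hind.eq_of_forall_sum_smul_eq fun x => ?_)
  rw [← hdecomp x, sum_smul_mulVec_eq_of_rotational_symmetry hQP hdecomp hrot x]
end

section
/- (Part (b) of the paper's Corollary 6.) Let P be a real n×n matrix with P^k = I for some k ≥ 1, also regarded as a complex matrix acting on ℂ^n. Let (ψ_i)_{i∈I} be a finite, ℂ-linearly independent family of functions ℝ^n → ℂ giving a full-state Koopman mode decomposition with modes v_i ∈ ℂ^n. Suppose two distinguished indices r ≠ t form a reflectional pair, ψ_r(P x) = c_r·ψ_t(x) and ψ_t(P x) = c_t·ψ_r(x) for all x ∈ ℝ^n with c_r, c_t ∈ ℂ, while every other index j ∈ I \ {r, t} satisfies a rotational symmetry ψ_j(P x) = c_j·ψ_j(x). Then the Koopman modes of the reflectional pair satisfy v_t = c_r·P^{k−1}·v_r and v_r = c_t·P^{k−1}·v_t. -/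
/-!
All the symmetry hypotheses together say `ψᵢ ∘ P = cᵢ ψ_{σ i}` for the transposition
`σ = (r t)`. Since complexification commutes with `P`, applying `P` to `x = ∑ ψᵢ(x) vᵢ`
expands `P x` both as `∑ ψᵢ(x) P vᵢ` and as `∑ ψᵢ(P x) vᵢ = ∑ ψ_{σ i}(x) cᵢ vᵢ`.
Comparing coefficients (linear independence) gives `P v_r = c_t v_t` and `P v_t = c_r v_r`,
which invert via `P⁻¹ = P^{k-1}`.
-/

open Matrix

theorem LinearIndependent.eq_of_forall_sum_smul_eq_s17 {R V X I : Type*} [CommRing R]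
    [AddCommGroup V] [Module R V] [Module.Projective R V] [Fintype I]
    {ψ : I → X → R} (hψ : LinearIndependent R ψ) {a b : I → V}
    (hab : ∀ x, ∑ i, ψ i x • a i = ∑ i, ψ i x • b i) : a = b := by
  funext i
  rw [← sub_eq_zero, ← Module.forall_dual_apply_eq_zero_iff R]
  intro φ
  have hsum : ∑ j, φ (a j - b j) • ψ j = 0 := by
    funext x
    have hx := congrArg φ (sub_eq_zero.mpr (hab x))
    simpa [← Finset.sum_sub_distrib, ← smul_sub, mul_comm] using hx
  exact Fintype.linearIndependent_iff.mp hψ _ hsum i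

theorem LinearIndependent.map_mode_eq_of_comp_eq_smul_perm {R V X I : Type*} [CommRing R]
    [AddCommGroup V] [Module R V] [Module.Projective R V] [Fintype I]
    {ψ : I → X → R} (hψ : LinearIndependent R ψ) {f : X → V} {v : I → V}
    (hdecomp : ∀ x, f x = ∑ i, ψ i x • v i) {T : X → X} {L : V →ₗ[R] V}
    (hL : ∀ x, f (T x) = L (f x)) (σ : Equiv.Perm I) (c : I → R)
    (hT : ∀ i x, ψ i (T x) = c i * ψ (σ i) x) (i : I) :
    L (v (σ i)) = c i • v i := by
  have hmodes : (fun j => L (v j)) = fun j => c (σ.symm j) • v (σ.symm j) := by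
    refine hψ.eq_of_forall_sum_smul_eq_s17 fun x => ?_
    calc ∑ j, ψ j x • L (v j) = f (T x) := by simp [hL, hdecomp]
      _ = ∑ j, ψ (σ j) x • (c j • v j) := by simp [hdecomp, hT, smul_smul, mul_comm]
      _ = ∑ j, ψ j x • (c (σ.symm j) • v (σ.symm j)) :=
        Fintype.sum_equiv σ _ _ fun j => by simp
  simpa using congrFun hmodes (σ i)

theorem Matrix.eq_smul_pow_pred_mulVec_of_mulVec_eq {R ι : Type*} [CommRing R] [Fintype ι]
    [DecidableEq ι] {Q : Matrix ι ι R} {k : ℕ} (hk : 1 ≤ k) (hQk : Q ^ k = 1) {w u : ι → R}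
    {a : R} (h : Q *ᵥ w = a • u) : w = a • (Q ^ (k - 1)) *ᵥ u := by
  calc w = (Q ^ (k - 1) * Q) *ᵥ w := by rw [← pow_succ, Nat.sub_add_cancel hk, hQk, one_mulVec]
    _ = a • (Q ^ (k - 1)) *ᵥ u := by rw [← mulVec_mulVec, h, mulVec_smul]

theorem reflectional_pair_koopman_modes_general
    {n : ℕ} (P : Matrix (Fin n) (Fin n) ℝ) (k : ℕ) (hk : 1 ≤ k) (hPk : P ^ k = 1)
    {I : Type*} [Fintype I]
    (ψ : I → (Fin n → ℝ) → ℂ) (v : I → (Fin n → ℂ))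
    (hind : LinearIndependent ℂ ψ)
    (hdecomp : ∀ x : Fin n → ℝ, (fun j => (x j : ℂ)) = ∑ i, ψ i x • v i)
    (r t : I)
    (c : I → ℂ)
    (hrefl₁ : ∀ x, ψ r (P.mulVec x) = c r * ψ t x)
    (hrefl₂ : ∀ x, ψ t (P.mulVec x) = c t * ψ r x)
    (hrot : ∀ j, j ≠ r → j ≠ t → ∀ x, ψ j (P.mulVec x) = c j * ψ j x) :
    v t = c r • ((P.map (Complex.ofReal)) ^ (k - 1)).mulVec (v r) ∧
      v r = c t • ((P.map (Complex.ofReal)) ^ (k - 1)).mulVec (v t) := by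
  classical
  set Q := P.map Complex.ofRealHom
  have hQk : Q ^ k = 1 := by rw [← Matrix.map_pow, hPk, Matrix.map_one _ (map_zero _) (map_one _)]
  have hcomplexify : ∀ x : Fin n → ℝ,
      (fun j => ((P *ᵥ x) j : ℂ)) = Q.mulVecLin fun j => (x j : ℂ) :=
    fun x => funext (RingHom.map_mulVec Complex.ofRealHom P x)
  have hswap : ∀ i x, ψ i (P *ᵥ x) = c i * ψ (Equiv.swap r t i) x := by
    intro i x
    by_cases hir : i = r
    · subst hir; simp [hrefl₁]
    by_cases hit : i = t
    · subst hit; simp [hrefl₂]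
    · rw [Equiv.swap_apply_of_ne_of_ne hir hit, hrot i hir hit]
  have hmode := hind.map_mode_eq_of_comp_eq_smul_perm hdecomp hcomplexify (Equiv.swap r t) c hswap
  refine ⟨eq_smul_pow_pred_mulVec_of_mulVec_eq hk hQk ?_,
    eq_smul_pow_pred_mulVec_of_mulVec_eq hk hQk ?_⟩
  · simpa using hmode r
  · simpa using hmode t

/-- part (b) of the paper's Corollary 6: Let `P` be a real `n×n` matrix with
`P^k = 1`, `k ≥ 1`, and let `(ψ i)` be a finite `ℂ`-linearly independent family giving a
full-state Koopman mode decomposition with modes `v i`, where indices `r ≠ t` form a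
reflectional pair (`ψ r (P·x) = c r * ψ t x`, `ψ t (P·x) = c t * ψ r x`) and every other
index has a rotational symmetry (`ψ j (P·x) = c j * ψ j x`).  Then the Koopman modes of the
reflectional pair satisfy `v t = c r • P^{k-1}·(v r)` and `v r = c t • P^{k-1}·(v t)` (with
`P` regarded as a complex matrix). -/
theorem reflectional_pair_koopman_modes
    {n : ℕ} (P : Matrix (Fin n) (Fin n) ℝ) (k : ℕ) (hk : 1 ≤ k) (hPk : P ^ k = 1)
    {I : Type*} [Fintype I]
    (ψ : I → (Fin n → ℝ) → ℂ) (v : I → (Fin n → ℂ))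
    (hind : LinearIndependent ℂ ψ)
    (hdecomp : ∀ x : Fin n → ℝ, (fun j => (x j : ℂ)) = ∑ i, ψ i x • v i)
    (r t : I) (hrt : r ≠ t)
    (c : I → ℂ)
    (hrefl₁ : ∀ x, ψ r (P.mulVec x) = c r * ψ t x)
    (hrefl₂ : ∀ x, ψ t (P.mulVec x) = c t * ψ r x)
    (hrot : ∀ j, j ≠ r → j ≠ t → ∀ x, ψ j (P.mulVec x) = c j * ψ j x) :
    v t = c r • ((P.map (Complex.ofReal)) ^ (k - 1)).mulVec (v r) ∧
      v r = c t • ((P.map (Complex.ofReal)) ^ (k - 1)).mulVec (v t) :=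
  reflectional_pair_koopman_modes_general P k hk hPk ψ v hind hdecomp r t c hrefl₁ hrefl₂ hrot
end
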